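/- Every indecomposable PInD-injective right S-act over a monoid S is injective; in particular, every indecomposable InD-injective right S-act is injective. -/

import Mathlib

universe u

/-- A right `S`-act structure on a nonempty type `A`: a right action of the monoid `S`. -/
class RightAct (S : Type u) [Monoid S] (A : Type u) : Type u where
  act : A → S → A
  act_one : ∀ a : A, act a 1 = a
  act_mul : ∀ (a : A) (s t : S), act (act a s) t = act a (s * t)
  nonempty : Nonempty A

infixl:70 " ⊛ " => RightAct.act

/-- `S` is left reversible: every two right ideals (equiv. principal ones) intersect. -/
def LeftReversible (S : Type u) [Monoid S] : Prop :=
  ∀ a b : S, ∃ u v : S, a * u = b * v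

/-- A left zero element of the monoid `S`. -/
def IsLeftZero (S : Type u) [Monoid S] (z : S) : Prop :=
  ∀ s : S, z * s = z

/-- `f : A → B` is a homomorphism of right `S`-acts. -/
def IsActHom (S : Type u) [Monoid S] {A B : Type u} [RightAct S A] [RightAct S B]
    (f : A → B) : Prop :=
  ∀ (a : A) (s : S), f (a ⊛ s) = f a ⊛ s

/-- The restriction of `f : A → B` to the subset `C` is a homomorphism of right `S`-acts. -/
def IsActHomOn (S : Type u) [Monoid S] {A B : Type u} [RightAct S A] [RightAct S B]
    (f : A → B) (C : Set A) : Prop :=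
  ∀ a ∈ C, ∀ s : S, f (a ⊛ s) = f a ⊛ s

/-- A subact: a nonempty subset closed under the action. -/
def IsSubact (S : Type u) [Monoid S] {A : Type u} [RightAct S A] (C : Set A) : Prop :=
  C.Nonempty ∧ ∀ a ∈ C, ∀ s : S, a ⊛ s ∈ C

/-- A zero element of an act: fixed by the action of every `s ∈ S`. -/
def IsZeroElem (S : Type u) [Monoid S] {A : Type u} [RightAct S A] (θ : A) : Prop :=
  ∀ s : S, θ ⊛ s = θ

/-- A subset `D` (viewed as an act) is decomposable: it is the disjoint union of two
nonempty subacts. -/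
def DecomposableSet (S : Type u) [Monoid S] {A : Type u} [RightAct S A] (D : Set A) : Prop :=
  ∃ B C : Set A, IsSubact S B ∧ IsSubact S C ∧ B ∪ C = D ∧ B ∩ C = ∅

/-- A subset (viewed as an act) is indecomposable. -/
def IndecomposableSet (S : Type u) [Monoid S] {A : Type u} [RightAct S A] (D : Set A) : Prop :=
  ¬ DecomposableSet S D

/-- The act `A` is decomposable. -/
def Decomposable (S : Type u) [Monoid S] (A : Type u) [RightAct S A] : Prop :=
  DecomposableSet S (Set.univ : Set A)

/-- The act `A` is indecomposable. -/
def Indecomposable (S : Type u) [Monoid S] (A : Type u) [RightAct S A] : Prop :=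
  ¬ Decomposable S A

/-- A cyclic act: generated by a single element. -/
def CyclicAct (S : Type u) [Monoid S] (A : Type u) [RightAct S A] : Prop :=
  ∃ a : A, ∀ x : A, ∃ s : S, x = a ⊛ s

/-- `A` is a retract of `B`. -/
def IsRetractOf (S : Type u) [Monoid S] (A B : Type u) [RightAct S A] [RightAct S B] : Prop :=
  ∃ (i : A → B) (p : B → A), IsActHom S i ∧ IsActHom S p ∧ ∀ a : A, p (i a) = a

/-- `Q` is an injective act: every homomorphism from a subact `C` of any act `B` into `Q`
extends to `B`. -/
def ActInjective (S : Type u) [Monoid S] (Q : Type u) [RightAct S Q] : Prop :=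
  ∀ (B : Type u) [RightAct S B], ∀ C : Set B, IsSubact S C →
    ∀ f : B → Q, IsActHomOn S f C →
      ∃ g : B → Q, IsActHom S g ∧ Set.EqOn g f C

/-- `Q` is InC-injective: injective relative to all embeddings into indecomposable acts. -/
def InCInjective (S : Type u) [Monoid S] (Q : Type u) [RightAct S Q] : Prop :=
  ∀ (B : Type u) [RightAct S B], Indecomposable S B → ∀ C : Set B, IsSubact S C →
    ∀ f : B → Q, IsActHomOn S f C →
      ∃ g : B → Q, IsActHom S g ∧ Set.EqOn g f C

/-- `Q` is InD-injective: injective relative to all embeddings of indecomposable acts. -/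
def InDInjective (S : Type u) [Monoid S] (Q : Type u) [RightAct S Q] : Prop :=
  ∀ (B : Type u) [RightAct S B], ∀ C : Set B, IsSubact S C → IndecomposableSet S C →
    ∀ f : B → Q, IsActHomOn S f C →
      ∃ g : B → Q, IsActHom S g ∧ Set.EqOn g f C

/-- `Q` is PInD-injective: every monomorphism from an indecomposable subact extends. -/
def PInDInjective (S : Type u) [Monoid S] (Q : Type u) [RightAct S Q] : Prop :=
  ∀ (B : Type u) [RightAct S B], ∀ C : Set B, IsSubact S C → IndecomposableSet S C →
    ∀ f : B → Q, IsActHomOn S f C → Set.InjOn f C →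
      ∃ g : B → Q, IsActHom S g ∧ Set.EqOn g f C

/-- `A` is quasi injective: homomorphisms from subacts of `A` to `A` extend to `A`. -/
def QuasiInjective (S : Type u) [Monoid S] (A : Type u) [RightAct S A] : Prop :=
  ∀ C : Set A, IsSubact S C → ∀ f : A → A, IsActHomOn S f C →
    ∃ g : A → A, IsActHom S g ∧ Set.EqOn g f C

/-- `A` is pseudo injective: monomorphisms from subacts of any act into `A` extend. -/
def PseudoInjective (S : Type u) [Monoid S] (A : Type u) [RightAct S A] : Prop :=
  ∀ (C : Type u) [RightAct S C], ∀ B : Set C, IsSubact S B →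
    ∀ f : C → A, IsActHomOn S f B → Set.InjOn f B →
      ∃ g : C → A, IsActHom S g ∧ Set.EqOn g f B

/-- A subact `Q` of `A` (viewed as an act in its own right) is injective. -/
def ActInjectiveSet (S : Type u) [Monoid S] {A : Type u} [RightAct S A] (Q : Set A) : Prop :=
  ∀ (B : Type u) [RightAct S B], ∀ C : Set B, IsSubact S C →
    ∀ f : B → A, IsActHomOn S f C → (∀ c ∈ C, f c ∈ Q) →
      ∃ g : B → A, IsActHom S g ∧ (∀ b : B, g b ∈ Q) ∧ Set.EqOn g f C

/-- A subact `Q` of `A` (viewed as an act in its own right) is InD-injective. -/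
def InDInjectiveSet (S : Type u) [Monoid S] {A : Type u} [RightAct S A] (Q : Set A) : Prop :=
  ∀ (B : Type u) [RightAct S B], ∀ C : Set B, IsSubact S C → IndecomposableSet S C →
    ∀ f : B → A, IsActHomOn S f C → (∀ c ∈ C, f c ∈ Q) →
      ∃ g : B → A, IsActHom S g ∧ (∀ b : B, g b ∈ Q) ∧ Set.EqOn g f C

/-- A subact `Q` of `A` (viewed as an act in its own right) is PInD-injective. -/
def PInDInjectiveSet (S : Type u) [Monoid S] {A : Type u} [RightAct S A] (Q : Set A) : Prop :=
  ∀ (B : Type u) [RightAct S B], ∀ C : Set B, IsSubact S C → IndecomposableSet S C →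
    ∀ f : B → A, IsActHomOn S f C → Set.InjOn f C → (∀ c ∈ C, f c ∈ Q) →
      ∃ g : B → A, IsActHom S g ∧ (∀ b : B, g b ∈ Q) ∧ Set.EqOn g f C

/-- The monoid `S` as a right act over itself, by multiplication. -/
instance selfAct (S : Type u) [Monoid S] : RightAct S S where
  act a s := a * s
  act_one := mul_one
  act_mul a s t := mul_assoc a s t
  nonempty := ⟨1⟩

/-- `Q` is weakly injective: homomorphisms from right ideals of `S` into `Q` extend to `S`. -/
def WeaklyInjective (S : Type u) [Monoid S] (Q : Type u) [RightAct S Q] : Prop :=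
  ∀ I : Set S, IsSubact S I → ∀ f : S → Q, IsActHomOn S f I →
    ∃ g : S → Q, IsActHom S g ∧ Set.EqOn g f I

/-- The relation whose equivalence closure has the indecomposable components as classes. -/
def ActRel (S : Type u) [Monoid S] {A : Type u} [RightAct S A] (a b : A) : Prop :=
  ∃ s : S, b = a ⊛ s

/-- The indecomposable component of the element `a` of an act. -/
def ActComponent (S : Type u) [Monoid S] {A : Type u} [RightAct S A] (a : A) : Set A :=
  {b | Relation.EqvGen (ActRel S) a b}

/-!
Given a homomorphism `f` from a subact `C` of `B` into `A`, glue `B` and `A` together along `f`.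
`A` embeds into this pushout, and its image is indecomposable because `A` is. The inverse of the
embedding is then a monomorphism from an indecomposable subact into `A`, so PInD-injectivity
extends it to a retraction of the pushout onto `A`; restricted to `B`, the retraction extends `f`.
-/

open Function Set

variable {S : Type u} [Monoid S]

section Range

variable {A P : Type u} [RightAct S A] [RightAct S P] {i : A → P}

theorem IsActHom.isSubact_range (hi : IsActHom S i) : IsSubact S (range i) := by
  obtain ⟨q⟩ := RightAct.nonempty (S := S) (A := A)
  refine ⟨⟨i q, q, rfl⟩, ?_⟩
  rintro _ ⟨q, rfl⟩ s
  exact ⟨q ⊛ s, hi q s⟩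

theorem IsActHom.isSubact_preimage (hi : IsActHom S i) {D : Set P} (hD : IsSubact S D)
    (hDi : D ⊆ range i) : IsSubact S (i ⁻¹' D) := by
  obtain ⟨_, hp⟩ := hD.1
  obtain ⟨q, rfl⟩ := hDi hp
  refine ⟨⟨q, hp⟩, fun a ha s => ?_⟩
  rw [mem_preimage, hi]
  exact hD.2 _ ha s

theorem Indecomposable.indecomposableSet_range (hA : Indecomposable S A) (hi : IsActHom S i) :
    IndecomposableSet S (range i) := by
  rintro ⟨D, E, hD, hE, hDE, hDE'⟩
  refine hA ⟨i ⁻¹' D, i ⁻¹' E, hi.isSubact_preimage hD (hDE ▸ subset_union_left),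
    hi.isSubact_preimage hE (hDE ▸ subset_union_right), ?_, ?_⟩
  · rw [← preimage_union, hDE, preimage_range]
  · rw [← preimage_inter, hDE', preimage_empty]

end Range

theorem InDInjective.pInDInjective {A : Type u} [RightAct S A] (hA : InDInjective S A) :
    PInDInjective S A :=
  fun B _ C hC hCind f hf _ => hA B C hC hCind f hf

theorem PInDInjective.exists_leftInverse {A P : Type u} [RightAct S A] [RightAct S P]
    (hP : PInDInjective S A) (hA : Indecomposable S A) {i : A → P} (hi : IsActHom S i)
    (hinj : Injective i) : ∃ r : P → A, IsActHom S r ∧ LeftInverse r i := by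
  have : Nonempty A := RightAct.nonempty (S := S)
  have hhom : IsActHomOn S (invFun i) (range i) := by
    rintro _ ⟨q, rfl⟩ s
    rw [← hi, leftInverse_invFun hinj, leftInverse_invFun hinj]
  have hinjOn : InjOn (invFun i) (range i) :=
    LeftInvOn.injOn (f₁' := i) fun _ hp => invFun_eq hp
  obtain ⟨r, hr, hri⟩ := hP P (range i) hi.isSubact_range (hA.indecomposableSet_range hi)
    (invFun i) hhom hinjOn
  exact ⟨r, hr, fun q => (hri ⟨q, rfl⟩).trans (leftInverse_invFun hinj q)⟩

namespace ActPushout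

variable {B A : Type u}

/-- Identifies each `c ∈ C` with `f c`; the `inl`–`inl` clause is what transitivity through `A`
forces. -/
def rel (C : Set B) (f : B → A) : B ⊕ A → B ⊕ A → Prop
  | .inl b, .inl b' => b = b' ∨ (b ∈ C ∧ b' ∈ C ∧ f b = f b')
  | .inl b, .inr q => b ∈ C ∧ f b = q
  | .inr q, .inl b => b ∈ C ∧ f b = q
  | .inr q, .inr q' => q = q'

theorem rel_equivalence (C : Set B) (f : B → A) : Equivalence (rel C f) where
  refl x := by cases x <;> simp [rel]
  symm {x y} h := by
    cases x <;> cases y <;> simp only [rel] at * <;> aesop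
  trans {x y z} hxy hyz := by
    cases x <;> cases y <;> cases z <;> simp only [rel] at * <;> aesop

def setoid (C : Set B) (f : B → A) : Setoid (B ⊕ A) :=
  ⟨rel C f, rel_equivalence C f⟩

end ActPushout

def ActPushout {B A : Type u} (C : Set B) (f : B → A) : Type u :=
  Quotient (ActPushout.setoid C f)

namespace ActPushout

variable {B A : Type u} [RightAct S B] [RightAct S A] {C : Set B} {f : B → A}

def inl (b : B) : ActPushout C f := Quotient.mk _ (.inl b)

def inr (q : A) : ActPushout C f := Quotient.mk _ (.inr q)

theorem inr_injective : Injective (inr : A → ActPushout C f) :=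
  fun _ _ h => Quotient.exact h

theorem inl_eq_inr {c : B} (hc : c ∈ C) : (inl c : ActPushout C f) = inr (f c) :=
  Quotient.sound ⟨hc, rfl⟩

theorem rel_map_act (hC : ∀ c ∈ C, ∀ s : S, c ⊛ s ∈ C) (hf : IsActHomOn S f C) (s : S)
    {x y : B ⊕ A} (h : rel C f x y) :
    rel C f (Sum.map (· ⊛ s) (· ⊛ s) x) (Sum.map (· ⊛ s) (· ⊛ s) y) := by
  cases x <;> cases y <;> simp only [rel, Sum.map_inl, Sum.map_inr] at h ⊢
  · rcases h with rfl | ⟨hb, hb', he⟩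
    · exact Or.inl rfl
    · exact Or.inr ⟨hC _ hb s, hC _ hb' s, by rw [hf _ hb, hf _ hb', he]⟩
  · exact ⟨hC _ h.1 s, by rw [hf _ h.1, h.2]⟩
  · exact ⟨hC _ h.1 s, by rw [hf _ h.1, h.2]⟩
  · rw [h]

abbrev rightAct (hC : ∀ c ∈ C, ∀ s : S, c ⊛ s ∈ C) (hf : IsActHomOn S f C) :
    RightAct S (ActPushout C f) where
  act p s := Quotient.map' (Sum.map (· ⊛ s) (· ⊛ s)) (fun _ _ h => rel_map_act hC hf s h) p
  act_one p := by
    induction p using Quotient.ind with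
    | _ x => exact congrArg (Quotient.mk _) (by cases x <;> simp [RightAct.act_one])
  act_mul p s t := by
    induction p using Quotient.ind with
    | _ x => exact congrArg (Quotient.mk _) (by cases x <;> simp [RightAct.act_mul])
  nonempty := ⟨inr (Classical.choice (RightAct.nonempty (S := S)))⟩

end ActPushout

theorem actInjective_of_forall_exists_leftInverse {A : Type u} [RightAct S A]
    (hret : ∀ (P : Type u) [RightAct S P] (i : A → P), IsActHom S i → Injective i →
      ∃ r : P → A, IsActHom S r ∧ LeftInverse r i) :
    ActInjective S A := by
  intro B _ C hC f hf
  let := ActPushout.rightAct hC.2 hf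
  obtain ⟨r, hr, hri⟩ := hret (ActPushout C f) ActPushout.inr (fun _ _ => rfl)
    ActPushout.inr_injective
  refine ⟨r ∘ ActPushout.inl, fun b s => hr (ActPushout.inl b) s, fun c hc => ?_⟩
  rw [comp_apply, ActPushout.inl_eq_inr hc, hri]

theorem indecomposable_pInDInjective_injective (S : Type u) [Monoid S]
    (A : Type u) [RightAct S A] (hA : Indecomposable S A) :
    (PInDInjective S A → ActInjective S A) ∧
    (InDInjective S A → ActInjective S A) := by
  have key (hP : PInDInjective S A) : ActInjective S A :=
    actInjective_of_forall_exists_leftInverse fun _ _ _ hi hinj =>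
      hP.exists_leftInverse hA hi hinj
  exact ⟨key, fun hInD => key hInD.pInDInjective⟩
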